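/- Let μ⁺ and μ⁻ be finite positive Borel measures on ℝ with Borel transforms m⁺ and m⁻, and for Im z > 0 set M(z) = (m⁺(z)·m⁻(z) − 1)/(m⁺(z) + m⁻(z)). Let E ∈ ℝ and t ∈ (0,1). Suppose there exists ε₀ > 0 such that for all 0 < ε < ε₀ one has Im m⁺(E+iε) ≥ ε^{−t} and Im m⁻(E+iε) ≥ ε^{−t}. Then there exists ε₁ > 0 such that for all 0 < ε < ε₁, Im M(E+iε) ≥ (1/2)·ε^{−t}. -/

import Mathlib

/-!
Writing `a = m⁺(z)`, `b = m⁻(z)`, one has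
`Im ((a b - 1) / (a + b)) = (|a|² Im b + |b|² Im a + Im a + Im b) / |a + b|²`.
If `Im a, Im b ≥ s > 0`, the numerator is at least `s (|a|² + |b|²) ≥ (s / 2) |a + b|²`,
and the bound holds pointwise in `z`.
-/

open MeasureTheory Filter Set

/-- The Borel transform `m(z) = ∫ (x - z)⁻¹ dν(x)` of a measure `ν` on `ℝ`. -/
noncomputable def borelTransform (ν : Measure ℝ) (z : ℂ) : ℂ :=
  ∫ x : ℝ, ((x : ℂ) - z)⁻¹ ∂ν

namespace Complex

theorem im_mul_sub_one_div_add (a b : ℂ) :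
    ((a * b - 1) / (a + b)).im =
      (normSq a * b.im + normSq b * a.im + a.im + b.im) / normSq (a + b) := by
  rw [div_im, div_sub_div_same]
  congr 1
  simp only [normSq_apply, mul_im, mul_re, sub_im, sub_re, add_im, add_re, one_im, one_re]
  ring

theorem half_mul_le_im_mul_sub_one_div_add {a b : ℂ} {s : ℝ} (hs : 0 < s)
    (ha : s ≤ a.im) (hb : s ≤ b.im) : (1 / 2) * s ≤ ((a * b - 1) / (a + b)).im := by
  have hab : a + b ≠ 0 := fun h => by linarith [congrArg im h, add_im a b, zero_im]
  have hpar : normSq (a + b) ≤ 2 * (normSq a + normSq b) := by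
    nlinarith [normSq_add a b, normSq_sub a b, normSq_nonneg (a - b)]
  rw [im_mul_sub_one_div_add, le_div_iff₀ (normSq_pos.mpr hab)]
  nlinarith [mul_le_mul_of_nonneg_left hb (normSq_nonneg a),
    mul_le_mul_of_nonneg_left ha (normSq_nonneg b)]

end Complex

theorem stmt_4_general (μp μm : Measure ℝ)
    (E t : ℝ)
    (M : ℂ → ℂ)
    (hM : ∀ z : ℂ, 0 < z.im →
      M z = (borelTransform μp z * borelTransform μm z - 1) /
        (borelTransform μp z + borelTransform μm z))
    (ε₀ : ℝ) (hε₀ : 0 < ε₀)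
    (h : ∀ ε : ℝ, 0 < ε → ε < ε₀ →
      ε ^ (-t) ≤ (borelTransform μp (E + ε * Complex.I)).im ∧
      ε ^ (-t) ≤ (borelTransform μm (E + ε * Complex.I)).im) :
    ∃ ε₁ : ℝ, 0 < ε₁ ∧ ∀ ε : ℝ, 0 < ε → ε < ε₁ →
      (1 / 2) * ε ^ (-t) ≤ (M (E + ε * Complex.I)).im := by
  refine ⟨ε₀, hε₀, fun ε hε hεε₀ => ?_⟩
  obtain ⟨hp, hm⟩ := h ε hε hεε₀
  have hz : 0 < ((E : ℂ) + ε * Complex.I).im := by simpa using hε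
  rw [hM _ hz]
  exact Complex.half_mul_le_im_mul_sub_one_div_add (Real.rpow_pos_of_pos hε _) hp hm

/-- If both half-line Borel transforms satisfy `Im m^±(E+iε) ≥ ε^{-t}` for small `ε`,
then `M = (m⁺ m⁻ - 1)/(m⁺ + m⁻)` satisfies `Im M(E+iε) ≥ ε^{-t}/2` for small `ε`. -/
theorem stmt_4 (μp μm : Measure ℝ) [IsFiniteMeasure μp] [IsFiniteMeasure μm]
    (E t : ℝ) (ht0 : 0 < t) (ht1 : t < 1)
    (M : ℂ → ℂ)
    (hM : ∀ z : ℂ, 0 < z.im →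
      M z = (borelTransform μp z * borelTransform μm z - 1) /
        (borelTransform μp z + borelTransform μm z))
    (ε₀ : ℝ) (hε₀ : 0 < ε₀)
    (h : ∀ ε : ℝ, 0 < ε → ε < ε₀ →
      ε ^ (-t) ≤ (borelTransform μp (E + ε * Complex.I)).im ∧
      ε ^ (-t) ≤ (borelTransform μm (E + ε * Complex.I)).im) :
    ∃ ε₁ : ℝ, 0 < ε₁ ∧ ∀ ε : ℝ, 0 < ε → ε < ε₁ →
      (1 / 2) * ε ^ (-t) ≤ (M (E + ε * Complex.I)).im :=
  stmt_4_general μp μm E t M hM ε₀ hε₀ h
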